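/- arXiv:2410.11252 — 3 statements merged into one kernel-verified Lean document; each statement's English description precedes it below -/
import Mathlib

section
/- The formal power series identity Σ_{ℓ≥0} c_ℓ x^ℓ = 1/√(1 − 4x − 12x²) holds, where c_ℓ = (−2)^ℓ · Σ_{r=0}^{ℓ} C(ℓ, r)·C(2r, r)·(−1)^r. Equivalently, the square of the power series Σ_{ℓ≥0} c_ℓ x^ℓ times (1 − 4x − 12x²) equals 1. -/
open PowerSeries

namespace Stmt10Aux

noncomputable def F (l r : ℕ) : ℚ :=
  (-1 : ℚ) ^ r * (l.choose r : ℚ) * ((2 * r).choose r : ℚ)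

noncomputable def s (l : ℕ) : ℚ := ∑ r ∈ Finset.range (l + 1), F l r

noncomputable def c (l : ℕ) : ℚ := (-2 : ℚ) ^ l * s l

lemma F_eq_zero {l r : ℕ} (h : l < r) : F l r = 0 := by
  simp [F, Nat.choose_eq_zero_of_lt h]

lemma s_eq (l N : ℕ) (h : l < N) : (∑ r ∈ Finset.range N, F l r) = s l := by
  refine (Finset.sum_subset (Finset.range_subset_range.2 (by omega)) ?_).symm
  intro x hx hx'
  simp only [Finset.mem_range] at hx hx'
  exact F_eq_zero (by omega)

lemma hP (l m : ℕ) : ((l + 2).choose (m + 1) : ℚ) =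
    ((l + 1).choose m : ℚ) + ((l + 1).choose (m + 1) : ℚ) := by
  exact_mod_cast congrArg (Nat.cast : ℕ → ℚ) (Nat.choose_succ_succ' (l + 1) m)

lemma hL2 (l m : ℕ) : ((l : ℚ) + 1 - m) * ((l + 1).choose m : ℚ) =
    ((m : ℚ) + 1) * ((l + 1).choose (m + 1) : ℚ) := by
  rcases le_or_gt m (l + 1) with h | h
  · have h1 := Nat.choose_succ_right_eq (l + 1) m
    have h2 : (((l + 1).choose (m + 1) * (m + 1) : ℕ) : ℚ)
        = (((l + 1).choose m * (l + 1 - m) : ℕ) : ℚ) := congrArg (fun x : ℕ => (x : ℚ)) h1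
    push_cast [Nat.cast_sub h] at h2
    linarith
  · rw [Nat.choose_eq_zero_of_lt h, Nat.choose_eq_zero_of_lt (by omega)]
    simp

lemma hL1 (l m : ℕ) : ((l : ℚ) - m) * ((l + 1).choose (m + 1) : ℚ) =
    ((l : ℚ) + 1) * (l.choose (m + 1) : ℚ) := by
  rcases le_or_gt (m + 1) (l + 1) with h | h
  · have h1 := Nat.choose_mul_succ_eq l (m + 1)
    have h2 : ((l.choose (m + 1) * (l + 1) : ℕ) : ℚ)
        = (((l + 1).choose (m + 1) * (l + 1 - (m + 1)) : ℕ) : ℚ) :=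
      congrArg (fun x : ℕ => (x : ℚ)) h1
    have h3 : l + 1 - (m + 1) = l - m := by omega
    rw [h3] at h2
    push_cast [Nat.cast_sub (by omega : m ≤ l)] at h2
    linarith
  · rw [Nat.choose_eq_zero_of_lt (by omega), Nat.choose_eq_zero_of_lt (by omega)]
    simp

lemma hL3 (m : ℕ) : (4 * (m : ℚ) + 2) * ((2 * m).choose m : ℚ)
    = ((m : ℚ) + 1) * ((2 * (m + 1)).choose (m + 1) : ℚ) := by
  have h2 : ((m + 1) * ((2 * (m + 1)).choose (m + 1)) : ℕ)
      = (2 * (2 * m + 1) * ((2 * m).choose m) : ℕ) := Nat.succ_mul_centralBinom_succ m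
  have h3 : (((m + 1) * ((2 * (m + 1)).choose (m + 1)) : ℕ) : ℚ)
      = ((2 * (2 * m + 1) * ((2 * m).choose m) : ℕ) : ℚ) := congrArg (fun x : ℕ => (x : ℚ)) h2
  push_cast at h3
  linarith

noncomputable def g (l : ℕ) : ℕ → ℚ
  | 0 => 0
  | (m + 1) => (4 * (m : ℚ) + 2) * F (l + 1) m

lemma certificate (l r : ℕ) :
    ((l : ℚ) + 2) * F (l + 2) r + (2 * (l : ℚ) + 3) * F (l + 1) r
      - 3 * ((l : ℚ) + 1) * F l r = g l (r + 1) - g l r := by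
  cases r with
  | zero =>
      simp [F, g]
      ring
  | succ m =>
      simp only [F, g]
      push_cast
      have e1 := hP l m
      have e2 := hL2 l m
      have e3 := hL1 l m
      have e4 := hL3 m
      linear_combination (-((-1:ℚ)^m) * ((2*(m+1)).choose (m+1) : ℚ)) *
          ((((l:ℚ)+2) * e1) + e2 + 3 * e3) + (((-1:ℚ)^m) * (((l+1).choose m : ℕ) : ℚ)) * e4

lemma s_rec (l : ℕ) :
    ((l : ℚ) + 2) * s (l + 2) + (2 * (l : ℚ) + 3) * s (l + 1)
      = 3 * ((l : ℚ) + 1) * s l := by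
  have tel : ∑ r ∈ Finset.range (l + 3), (g l (r + 1) - g l r) = g l (l + 3) - g l 0 :=
    Finset.sum_range_sub (g l) (l + 3)
  have hend : g l (l + 3) = 0 := by
    simp [g, F_eq_zero (show l + 1 < l + 2 by omega)]
  have h0 : g l 0 = 0 := rfl
  have hsum : ∑ r ∈ Finset.range (l + 3),
      (((l : ℚ) + 2) * F (l + 2) r + (2 * (l : ℚ) + 3) * F (l + 1) r
        - 3 * ((l : ℚ) + 1) * F l r) = 0 := by
    rw [Finset.sum_congr rfl (fun r _ => certificate l r), tel, hend, h0, sub_zero]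
  rw [Finset.sum_sub_distrib, Finset.sum_add_distrib, ← Finset.mul_sum, ← Finset.mul_sum,
    ← Finset.mul_sum, s_eq (l + 2) (l + 3) (by omega), s_eq (l + 1) (l + 3) (by omega),
    s_eq l (l + 3) (by omega)] at hsum
  linarith

lemma c_rec (l : ℕ) :
    ((l : ℚ) + 2) * c (l + 2) = (4 * (l : ℚ) + 6) * c (l + 1) + 12 * ((l : ℚ) + 1) * c l := by
  simp only [c]
  have h := s_rec l
  linear_combination ((-2 : ℚ)) ^ (l + 2) * h

lemma c_zero : c 0 = 1 := by
  simp [c, s, F]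

lemma c_one : c 1 = 2 := by
  simp [c, s, F, Finset.sum_range_succ]
  norm_num

noncomputable def f : PowerSeries ℚ := PowerSeries.mk c

noncomputable def fd : PowerSeries ℚ := PowerSeries.mk (fun n => ((n : ℚ) + 1) * c (n + 1))

lemma deriv_f : d⁄dX ℚ f = fd := by
  ext n
  simp only [fd, f, coeff_mk, coeff_derivative]
  ring

lemma coeff_fd (n : ℕ) : coeff n fd = ((n : ℚ) + 1) * c (n + 1) := coeff_mk _ _

lemma coeff_f' (n : ℕ) : coeff n f = c n := coeff_mk _ _

lemma czX (h : PowerSeries ℚ) : coeff 0 (X * h) = 0 := by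
  rw [coeff_zero_eq_constantCoeff, map_mul, constantCoeff_X, zero_mul]

lemma czX2 (h : PowerSeries ℚ) : coeff 0 ((X : PowerSeries ℚ) ^ 2 * h) = 0 := by
  rw [pow_two, mul_assoc]; exact czX _

lemma c1X2 (h : PowerSeries ℚ) : coeff 1 ((X : PowerSeries ℚ) ^ 2 * h) = 0 := by
  rw [pow_two, mul_assoc, coeff_succ_X_mul]; exact czX _

lemma key : fd * (1 - 4 * (X : PowerSeries ℚ) - 12 * (X : PowerSeries ℚ) ^ 2)
    = (2 + 12 * (X : PowerSeries ℚ)) * f := by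
  have h4 : (4 : PowerSeries ℚ) = C 4 := by simp [map_ofNat]
  have h12 : (12 : PowerSeries ℚ) = C 12 := by simp [map_ofNat]
  have h2 : (2 : PowerSeries ℚ) = C 2 := by simp [map_ofNat]
  have expandL : fd * (1 - 4 * (X : PowerSeries ℚ) - 12 * (X : PowerSeries ℚ) ^ 2)
      = fd - X * ((4 : PowerSeries ℚ) * fd) - X ^ 2 * ((12 : PowerSeries ℚ) * fd) := by ring
  have expandR : (2 + 12 * (X : PowerSeries ℚ)) * f
      = (2 : PowerSeries ℚ) * f + X * ((12 : PowerSeries ℚ) * f) := by ring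
  rw [expandL, expandR, h4, h12, h2]
  ext n
  match n with
  | 0 =>
      simp only [map_sub, map_add, czX, czX2, coeff_C_mul, coeff_fd, coeff_f', sub_zero,
        add_zero]
      rw [c_one, c_zero]
      norm_num
  | 1 =>
      simp only [map_sub, map_add, c1X2, coeff_succ_X_mul, coeff_C_mul, coeff_fd, coeff_f',
        sub_zero]
      have h := c_rec 0
      rw [c_one, c_zero] at h ⊢
      push_cast at h ⊢
      linarith
  | (m + 2) =>
      have hx2 : (coeff (m + 2)) ((X : PowerSeries ℚ) ^ 2 * (C 12 * fd))
          = (coeff m) (C 12 * fd) := coeff_X_pow_mul (C 12 * fd) 2 m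
      have hs1 : (m + 2 : ℕ) = (m + 1) + 1 := rfl
      simp only [map_sub, map_add, hx2, hs1, coeff_succ_X_mul, coeff_C_mul, coeff_fd, coeff_f']
      have h := c_rec (m + 1)
      push_cast at h ⊢
      linarith

lemma deriv_poly : d⁄dX ℚ (1 - 4 * (X : PowerSeries ℚ) - 12 * (X : PowerSeries ℚ) ^ 2)
    = -(4 + 24 * (X : PowerSeries ℚ)) := by
  have h4 : (4 : PowerSeries ℚ) = C 4 := by simp [map_ofNat]
  have h12 : (12 : PowerSeries ℚ) = C 12 := by simp [map_ofNat]
  have h24 : (24 : PowerSeries ℚ) = C 24 := by simp [map_ofNat]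
  rw [show (1 - 4 * (X : PowerSeries ℚ) - 12 * (X : PowerSeries ℚ) ^ 2 : PowerSeries ℚ)
      = 1 - (4 : ℚ) • (X : PowerSeries ℚ) - (12 : ℚ) • ((X : PowerSeries ℚ) ^ 2) by
    rw [h4, h12]; simp [smul_eq_C_mul]]
  rw [map_sub, map_sub, Derivation.map_smul, Derivation.map_smul,
    Derivation.map_one_eq_zero, derivative_X, Derivation.leibniz_pow]
  simp only [smul_eq_C_mul, smul_eq_mul, nsmul_eq_mul, derivative_X,
    show (2 - 1 : ℕ) = 1 from rfl, pow_one, Nat.cast_ofNat, mul_one]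
  rw [← h4, ← h12]
  ring

lemma const_f : constantCoeff f = 1 := by
  rw [← coeff_zero_eq_constantCoeff]
  simp [f, c_zero]

theorem main :
    (PowerSeries.mk (fun ℓ : ℕ =>
        (-2 : ℚ) ^ ℓ *
          ∑ r ∈ Finset.range (ℓ + 1),
            (-1 : ℚ) ^ r * (ℓ.choose r : ℚ) * ((2 * r).choose r : ℚ))) ^ 2 *
      (1 - 4 * (X : PowerSeries ℚ) - 12 * (X : PowerSeries ℚ) ^ 2) = 1 := by
  have hf : (PowerSeries.mk (fun ℓ : ℕ =>
        (-2 : ℚ) ^ ℓ *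
          ∑ r ∈ Finset.range (ℓ + 1),
            (-1 : ℚ) ^ r * (ℓ.choose r : ℚ) * ((2 * r).choose r : ℚ))) = f := rfl
  rw [hf]
  set p : PowerSeries ℚ := 1 - 4 * X - 12 * X ^ 2 with hp
  apply derivative.ext
  · rw [Derivation.map_one_eq_zero]
    rw [Derivation.leibniz, Derivation.leibniz_pow, deriv_f, hp, deriv_poly]
    simp only [smul_eq_mul, nsmul_eq_mul, Nat.cast_ofNat, show (2 - 1 : ℕ) = 1 from rfl, pow_one]
    have k := key
    linear_combination 2 * f * k
  · simp only [map_one, map_mul, map_pow, hp]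
    simp only [map_sub, map_mul, map_pow, constantCoeff_X, constantCoeff_one, const_f]
    norm_num

end Stmt10Aux

/-- Σ c_ℓ x^ℓ = 1/√(1 − 4x − 12x²), i.e. the square of the
series times (1 − 4x − 12x²) is 1, where
c_ℓ = (−2)^ℓ Σ_{r=0}^ℓ (−1)^r C(ℓ,r) C(2r,r). -/
theorem stmt10 :
    (PowerSeries.mk (fun ℓ : ℕ =>
        (-2 : ℚ) ^ ℓ *
          ∑ r ∈ Finset.range (ℓ + 1),
            (-1 : ℚ) ^ r * (ℓ.choose r : ℚ) * ((2 * r).choose r : ℚ))) ^ 2 *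
      (1 - 4 * (X : PowerSeries ℚ) - 12 * (X : PowerSeries ℚ) ^ 2) = 1 :=
  Stmt10Aux.main
end

section
/- The formal power series identity Σ_{ℓ≥0} n_ℓ x^ℓ = 3/√((1 − x)(1 − 25x)) holds, where n_ℓ = Σ_{k=0}^{ℓ} C(ℓ,k)² · 3^(2k+1) · 2^(2ℓ−2k). Equivalently, if f = Σ n_ℓ x^ℓ then f² · (1 − x)(1 − 25x) = 9. -/
open PowerSeries

/-- auxiliary: the rescaled sequence b ℓ = Σ C(ℓ,k)² (9/4)^k. -/
def bq11 (ℓ : ℕ) : ℚ := ∑ k ∈ Finset.range (ℓ + 1), (ℓ.choose k : ℚ) ^ 2 * (9/4) ^ k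

lemma bq11_ext (ℓ M : ℕ) (h : ℓ + 1 ≤ M) :
    bq11 ℓ = ∑ k ∈ Finset.range M, (ℓ.choose k : ℚ) ^ 2 * (9/4) ^ k := by
  unfold bq11
  apply Finset.sum_subset (Finset.range_subset_range.2 h)
  intro k _ hk
  have : ℓ < k := by simpa using hk
  simp [Nat.choose_eq_zero_of_lt this]

lemma ch1 (n j : ℕ) : ((n+2).choose (j+1) : ℚ) = (n+1).choose j + (n+1).choose (j+1) := by
  exact_mod_cast Nat.choose_succ_succ' (n+1) j

lemma ch2 (n j : ℕ) : ((n:ℚ)+1) * (n.choose (j+1)) = ((n:ℚ) - j) * ((n+1).choose (j+1)) := by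
  rcases le_or_gt j n with h | h
  · have hnat := Nat.choose_mul_succ_eq n (j+1)
    have hsub : n + 1 - (j+1) = n - j := by omega
    rw [hsub] at hnat
    have : ((n.choose (j+1) * (n+1) : ℕ) : ℚ) = (((n+1).choose (j+1) * (n - j) : ℕ) : ℚ) := by
      rw [hnat]
    push_cast [Nat.cast_sub h] at this
    linarith
  · have h1 : n.choose (j+1) = 0 := Nat.choose_eq_zero_of_lt (by omega)
    have h2 : (n+1).choose (j+1) = 0 := Nat.choose_eq_zero_of_lt (by omega)
    simp [h1, h2]

lemma ch3 (n j : ℕ) : ((j:ℚ)+1) * ((n+1).choose (j+1)) = ((n:ℚ)+1-j) * ((n+1).choose j) := by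
  rcases le_or_gt j (n+1) with h | h
  · have hnat := Nat.choose_succ_right_eq (n+1) j
    have : (((n+1).choose (j+1) * (j+1) : ℕ) : ℚ) = (((n+1).choose j * (n+1-j) : ℕ) : ℚ) := by
      rw [hnat]
    push_cast [Nat.cast_sub h] at this
    linarith
  · have h1 : (n+1).choose (j+1) = 0 := Nat.choose_eq_zero_of_lt (by omega)
    have h2 : (n+1).choose j = 0 := Nat.choose_eq_zero_of_lt (by omega)
    simp [h1, h2]

lemma bq11_rec (n : ℕ) :
    16*((n:ℚ)+2) * bq11 (n+1+1) = 52*(2*(n:ℚ)+3) * bq11 (n+1) - 25*((n:ℚ)+1) * bq11 n := by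
  have hsum : ∑ k ∈ Finset.range (n+3),
      (((n:ℚ)+1) * (16*((n:ℚ)+2)*((n+2).choose k : ℚ)^2*(9/4)^k
        - 52*(2*(n:ℚ)+3)*((n+1).choose k : ℚ)^2*(9/4)^k
        + 25*((n:ℚ)+1)*((n).choose k : ℚ)^2*(9/4)^k)) = 0 := by
    set H : ℕ → ℚ := fun k => if k = 0 then 0 else
      ((n+1).choose (k-1) : ℚ)^2 * (9/4)^(k-1) *
        (45*((k:ℚ)-1)^2 - 18*((n:ℚ)+1)*((k:ℚ)+1) - 63*((n:ℚ)+1)^2) with hH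
    have tel : ∀ k, (((n:ℚ)+1) * (16*((n:ℚ)+2)*((n+2).choose k : ℚ)^2*(9/4)^k
        - 52*(2*(n:ℚ)+3)*((n+1).choose k : ℚ)^2*(9/4)^k
        + 25*((n:ℚ)+1)*((n).choose k : ℚ)^2*(9/4)^k)) = H (k+1) - H k := by
      intro k
      cases k with
      | zero =>
        simp only [hH, if_pos rfl, if_neg one_ne_zero]
        norm_num
        ring
      | succ j =>
        simp only [hH, if_neg (Nat.succ_ne_zero _), if_neg (Nat.succ_ne_zero _),
          Nat.add_sub_cancel]
        have h1 := ch1 n j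
        have h2 := ch2 n j
        have h3 := ch3 n j
        apply mul_left_cancel₀ (a := 4*((n:ℚ)+1)*((j:ℚ)+1)^2) (by positivity)
        push_cast
        linear_combination ((9/4:ℚ)^j) * (
          (144*((n:ℚ)+1)^2*((j:ℚ)+1)^2*((n:ℚ)+2)*(((n+2).choose (j+1):ℚ) + ((n+1).choose (j+1):ℚ) + ((n+1).choose j:ℚ))) * h1
          + (225*((n:ℚ)+1)*((j:ℚ)+1)^2*(((n:ℚ)+1)*((n).choose (j+1):ℚ) + ((n:ℚ)-(j:ℚ))*((n+1).choose (j+1):ℚ))) * h2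
          + (((-468) + (-1116)*(j:ℚ) + (-828)*(j:ℚ)^2 + (-180)*(j:ℚ)^3 + (-756)*(n:ℚ) + (-1692)*(n:ℚ)*(j:ℚ) + (-1116)*(n:ℚ)*(j:ℚ)^2 + (-180)*(n:ℚ)*(j:ℚ)^3 + (-288)*(n:ℚ)^2 + (-576)*(n:ℚ)^2*(j:ℚ) + (-288)*(n:ℚ)^2*(j:ℚ)^2) * ((n+1).choose (j+1):ℚ)
            + ((108) + (396)*(j:ℚ) + (468)*(j:ℚ)^2 + (180)*(j:ℚ)^3 + (216)*(n:ℚ) + (612)*(n:ℚ)*(j:ℚ) + (576)*(n:ℚ)*(j:ℚ)^2 + (180)*(n:ℚ)*(j:ℚ)^3 + (108)*(n:ℚ)^2 + (216)*(n:ℚ)^2*(j:ℚ) + (108)*(n:ℚ)^2*(j:ℚ)^2) * ((n+1).choose j:ℚ)) * h3)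
    calc (∑ k ∈ Finset.range (n+3),
        (((n:ℚ)+1) * (16*((n:ℚ)+2)*((n+2).choose k : ℚ)^2*(9/4)^k
          - 52*(2*(n:ℚ)+3)*((n+1).choose k : ℚ)^2*(9/4)^k
          + 25*((n:ℚ)+1)*((n).choose k : ℚ)^2*(9/4)^k)))
        = ∑ k ∈ Finset.range (n+3), (H (k+1) - H k) :=
          Finset.sum_congr rfl (fun k _ => tel k)
      _ = H (n+3) - H 0 := Finset.sum_range_sub H (n+3)
      _ = 0 := by
          have : (n+1).choose (n+3-1) = 0 := Nat.choose_eq_zero_of_lt (by omega)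
          simp [hH, this]
  have e2 := bq11_ext (n+1+1) (n+3) (by omega)
  have e1 := bq11_ext (n+1) (n+3) (by omega)
  have e0 := bq11_ext n (n+3) (by omega)
  have hsplit : ((n:ℚ)+1) *
      (16*((n:ℚ)+2)*(∑ k ∈ Finset.range (n+3), ((n+2).choose k : ℚ)^2*(9/4)^k)
       - 52*(2*(n:ℚ)+3)*(∑ k ∈ Finset.range (n+3), ((n+1).choose k : ℚ)^2*(9/4)^k)
       + 25*((n:ℚ)+1)*(∑ k ∈ Finset.range (n+3), ((n).choose k : ℚ)^2*(9/4)^k)) =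
      ∑ k ∈ Finset.range (n+3),
      (((n:ℚ)+1) * (16*((n:ℚ)+2)*((n+2).choose k : ℚ)^2*(9/4)^k
        - 52*(2*(n:ℚ)+3)*((n+1).choose k : ℚ)^2*(9/4)^k
        + 25*((n:ℚ)+1)*((n).choose k : ℚ)^2*(9/4)^k)) := by
    rw [Finset.mul_sum, Finset.mul_sum, Finset.mul_sum, ← Finset.sum_sub_distrib,
      ← Finset.sum_add_distrib, Finset.mul_sum]
    exact Finset.sum_congr rfl (fun k _ => by ring)
  have hne : ((n:ℚ)+1) ≠ 0 := by positivity
  apply mul_left_cancel₀ hne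
  rw [e2, e1, e0]
  have hz := hsplit.trans hsum
  linear_combination hz

lemma a11_eq (ℓ : ℕ) :
    (∑ k ∈ Finset.range (ℓ + 1), (ℓ.choose k : ℚ) ^ 2 * 3 ^ (2 * k + 1) * 2 ^ (2 * ℓ - 2 * k))
      = 3 * 4 ^ ℓ * bq11 ℓ := by
  unfold bq11
  rw [Finset.mul_sum]
  apply Finset.sum_congr rfl
  intro k hk
  have hk' : k ≤ ℓ := by simpa [Nat.lt_succ_iff] using hk
  have h2 : (2:ℚ) ^ (2*ℓ - 2*k) = 4 ^ ℓ / 4 ^ k := by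
    have : 2*ℓ - 2*k = 2*(ℓ - k) := by omega
    rw [this, pow_mul]
    norm_num
    rw [pow_sub₀ (4:ℚ) (by norm_num) hk', div_eq_mul_inv]
  have h3 : (3:ℚ) ^ (2*k+1) = 3 * 9 ^ k := by
    rw [pow_succ, pow_mul]
    norm_num
    ring
  rw [h2, h3, div_pow]
  field_simp

/-- Σ n_ℓ x^ℓ = 3/√((1−x)(1−25x)), i.e. f²·(1−x)(1−25x) = 9,
where n_ℓ = Σ_{k=0}^ℓ C(ℓ,k)² 3^(2k+1) 2^(2ℓ−2k). -/
theorem stmt11 :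
    (PowerSeries.mk (fun ℓ : ℕ =>
        ∑ k ∈ Finset.range (ℓ + 1),
          (ℓ.choose k : ℚ) ^ 2 * 3 ^ (2 * k + 1) * 2 ^ (2 * ℓ - 2 * k))) ^ 2 *
      ((1 - (X : PowerSeries ℚ)) * (1 - 25 * (X : PowerSeries ℚ))) = 9 := by
  set f : PowerSeries ℚ := PowerSeries.mk (fun ℓ : ℕ =>
        ∑ k ∈ Finset.range (ℓ + 1),
          (ℓ.choose k : ℚ) ^ 2 * 3 ^ (2 * k + 1) * 2 ^ (2 * ℓ - 2 * k)) with hf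
  have hODE : (2:ℚ) • (d⁄dX ℚ f) - (52:ℚ) • (X * d⁄dX ℚ f) + (50:ℚ) • (X * (X * d⁄dX ℚ f))
      = (26:ℚ) • f - (50:ℚ) • (X * f) := by
    ext n
    simp only [map_sub, map_add, LinearMap.map_smul, smul_eq_mul]
    match n with
    | 0 =>
      simp [hf, coeff_zero_X_mul, coeff_derivative, coeff_mk, Finset.sum_range_succ]
      norm_num
    | 1 =>
      simp [hf, coeff_succ_X_mul, coeff_zero_X_mul, coeff_derivative, coeff_mk,
        Finset.sum_range_succ]
      norm_num
    | (m+2) =>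
      simp only [hf, coeff_succ_X_mul, coeff_derivative, coeff_mk, a11_eq]
      push_cast
      have hrec := bq11_rec (m+1)
      push_cast at hrec
      linear_combination (24*(4:ℚ)^m) * hrec
  have hODE' : (2:ℚ⟦X⟧) * (d⁄dX ℚ f) - 52 * (X * d⁄dX ℚ f) + 50 * (X * (X * d⁄dX ℚ f))
      = 26 * f - 50 * (X * f) := by
    have e : ∀ (q : ℕ) [q.AtLeastTwo] (g : ℚ⟦X⟧),
        (OfNat.ofNat q : ℚ) • g = (OfNat.ofNat q : ℚ⟦X⟧) * g := by
      intro q _ g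
      rw [smul_eq_C_mul, map_ofNat]
    rw [e, e, e, e, e] at hODE
    exact hODE
  have hpoly : ((1 : ℚ⟦X⟧) - X) * (1 - 25*X) = 1 - 26*X + 25*X^2 := by ring
  rw [hpoly]
  apply PowerSeries.derivative.ext (R := ℚ)
  · have h26 : d⁄dX ℚ (26 : ℚ⟦X⟧) = 0 := by rw [← map_ofNat (C (R := ℚ)) 26]; simp
    have h25 : d⁄dX ℚ (25 : ℚ⟦X⟧) = 0 := by rw [← map_ofNat (C (R := ℚ)) 25]; simp
    have h9 : d⁄dX ℚ (9 : ℚ⟦X⟧) = 0 := by rw [← map_ofNat (C (R := ℚ)) 9]; simp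
    rw [h9]
    have hDP : d⁄dX ℚ ((1 : ℚ⟦X⟧) - 26*X + 25*X^2) = -26 + 50*X := by
      rw [map_add, map_sub, Derivation.map_one_eq_zero]
      rw [Derivation.leibniz, Derivation.leibniz, Derivation.leibniz_pow]
      rw [h26, h25, derivative_X]
      simp only [smul_eq_mul, nsmul_eq_mul]
      push_cast
      ring
    rw [Derivation.leibniz, hDP, sq f, Derivation.leibniz]
    simp only [smul_eq_mul]
    linear_combination f * hODE'
  · simp only [map_mul, map_pow, map_sub, map_add, map_one, constantCoeff_X, hf,
      constantCoeff_mk]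
    norm_num [Finset.sum_range_succ]
    rfl
end

section
/- Work in the free F₃-module with basis {0,1,2}^(ℓ+1) (sequences of length ℓ+1 over {0,1,2}), with coefficients in F₃. Define F₂ = Σ_S S (sum of all sequences), F₁ = Σ_S (n₀(S) − n₁(S) mod 3)·S, and F₀ = Σ_S c(S)·S where c(S) = 1 if n₀(S) − n₁(S) ≡ 1 (mod 3) and c(S) = 0 otherwise. Then F₀, F₁, F₂ are F₃-linearly independent, and the minimum Hamming weight (number of nonzero coefficients) over all nonzero F₃-linear combinations a₀F₀ + a₁F₁ + a₂F₂ equals 3^ℓ. -/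
open Finset

private def wt3 : Fin 3 → ZMod 3 := ![1, 2, 0]

private def eqv3 : Fin 3 ≃ ZMod 3 where
  toFun := wt3
  invFun := fun c => if c = 0 then 2 else if c = 1 then 0 else 1
  left_inv := by decide
  right_inv := by decide

private lemma count_sum (m : ℕ) (c : ZMod 3) :
    (univ.filter fun S : Fin (m + 1) → Fin 3 => (∑ i, wt3 (S i)) = c).card = 3 ^ m := by
  rw [← Fintype.card_subtype]
  have E : {S : Fin (m + 1) → Fin 3 // (∑ i, wt3 (S i)) = c} ≃ (Fin m → Fin 3) :=
  { toFun := fun S => Fin.tail S.1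
    invFun := fun T => ⟨Fin.cons (eqv3.symm (c - ∑ i, wt3 (T i))) T, by
      rw [Fin.sum_univ_succ]
      simp only [Fin.cons_zero, Fin.cons_succ]
      have h2 : wt3 (eqv3.symm (c - ∑ i, wt3 (T i))) = c - ∑ i, wt3 (T i) :=
        eqv3.apply_symm_apply _
      rw [h2]; ring⟩
    left_inv := fun S => by
      obtain ⟨f, hf⟩ := S
      apply Subtype.ext
      show Fin.cons (eqv3.symm (c - ∑ i, wt3 (Fin.tail f i))) (Fin.tail f) = f
      have hc : c - ∑ i, wt3 (Fin.tail f i) = wt3 (f 0) := by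
        rw [← hf, Fin.sum_univ_succ]
        simp only [Fin.tail]
        ring
      rw [hc, show eqv3.symm (wt3 (f 0)) = f 0 from eqv3.symm_apply_apply _]
      exact Fin.cons_self_tail f
    right_inv := fun T => Fin.tail_cons _ _ }
  rw [Fintype.card_congr E]
  simp

private lemma D_eq (m : ℕ) (S : Fin (m + 1) → Fin 3) :
    (((univ.filter fun i => S i = 0).card : ZMod 3))
      - ((univ.filter fun i => S i = 1).card : ZMod 3) = ∑ i, wt3 (S i) := by
  have h0 : ((univ.filter fun i => S i = 0).card : ZMod 3)
      = ∑ i, if S i = 0 then (1 : ZMod 3) else 0 := by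
    rw [Finset.card_filter, Nat.cast_sum]
    simp
  have h1 : ((univ.filter fun i => S i = 1).card : ZMod 3)
      = ∑ i, if S i = 1 then (1 : ZMod 3) else 0 := by
    rw [Finset.card_filter, Nat.cast_sum]
    simp
  rw [h0, h1, ← Finset.sum_sub_distrib]
  apply Finset.sum_congr rfl
  intro i _
  have h : ∀ s : Fin 3,
      ((if s = 0 then (1 : ZMod 3) else 0) - if s = 1 then 1 else 0) = wt3 s := by decide
  exact h (S i)

private def gfun (a : Fin 3 → ZMod 3) (c : ZMod 3) : ZMod 3 :=
  a 0 * (if c = 1 then 1 else 0) + a 1 * c + a 2 * 1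

private lemma gfun_zero (a : Fin 3 → ZMod 3) (h : ∀ c : ZMod 3, gfun a c = 0) : a = 0 := by
  revert h
  revert a
  decide

/-- in the F₃-vector space of functions {0,1,2}^(ℓ+1) → F₃,
the vectors F₀, F₁, F₂ are linearly independent, and the minimum Hamming
weight over all nonzero F₃-linear combinations is 3^ℓ. -/
theorem stmt15 (ℓ : ℕ) :
    let n₀ : (Fin (ℓ + 1) → Fin 3) → ℕ := fun S => (univ.filter fun i => S i = 0).card
    let n₁ : (Fin (ℓ + 1) → Fin 3) → ℕ := fun S => (univ.filter fun i => S i = 1).card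
    let F0 : (Fin (ℓ + 1) → Fin 3) → ZMod 3 := fun S =>
      if ((n₀ S : ZMod 3) - (n₁ S : ZMod 3)) = 1 then 1 else 0
    let F1 : (Fin (ℓ + 1) → Fin 3) → ZMod 3 := fun S =>
      (n₀ S : ZMod 3) - (n₁ S : ZMod 3)
    let F2 : (Fin (ℓ + 1) → Fin 3) → ZMod 3 := fun _ => 1
    LinearIndependent (ZMod 3) ![F0, F1, F2] ∧
    IsLeast {w : ℕ | ∃ a : Fin 3 → ZMod 3, a ≠ 0 ∧
      w = (univ.filter fun S : Fin (ℓ + 1) → Fin 3 =>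
        a 0 * F0 S + a 1 * F1 S + a 2 * F2 S ≠ 0).card} (3 ^ ℓ) := by
  intro n₀ n₁ F0 F1 F2
  have hF1 : ∀ S : Fin (ℓ + 1) → Fin 3, F1 S = ∑ i, wt3 (S i) := fun S => D_eq ℓ S
  have hcount : ∀ c : ZMod 3,
      (univ.filter fun S : Fin (ℓ + 1) → Fin 3 => F1 S = c).card = 3 ^ ℓ := by
    intro c
    rw [show (univ.filter fun S : Fin (ℓ + 1) → Fin 3 => F1 S = c)
        = (univ.filter fun S : Fin (ℓ + 1) → Fin 3 => (∑ i, wt3 (S i)) = c) from by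
      apply Finset.filter_congr
      intro S _
      rw [hF1 S]]
    exact count_sum ℓ c
  have hex : ∀ c : ZMod 3, ∃ S : Fin (ℓ + 1) → Fin 3, F1 S = c := by
    intro c
    have hpos : 0 < (univ.filter fun S : Fin (ℓ + 1) → Fin 3 => F1 S = c).card := by
      rw [hcount c]; positivity
    obtain ⟨S, hS⟩ := Finset.card_pos.mp hpos
    exact ⟨S, (mem_filter.mp hS).2⟩
  have hpt : ∀ (a : Fin 3 → ZMod 3) (S : Fin (ℓ + 1) → Fin 3),
      a 0 * F0 S + a 1 * F1 S + a 2 * F2 S = gfun a (F1 S) := fun a S => rfl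
  have hweight : ∀ a : Fin 3 → ZMod 3,
      (univ.filter fun S : Fin (ℓ + 1) → Fin 3 =>
          a 0 * F0 S + a 1 * F1 S + a 2 * F2 S ≠ 0).card
        = (univ.filter fun c : ZMod 3 => gfun a c ≠ 0).card * 3 ^ ℓ := by
    intro a
    have key : (univ.filter fun S : Fin (ℓ + 1) → Fin 3 =>
        a 0 * F0 S + a 1 * F1 S + a 2 * F2 S ≠ 0)
        = univ.filter fun S : Fin (ℓ + 1) → Fin 3 => gfun a (F1 S) ≠ 0 := by
      apply Finset.filter_congr
      intro S _
      rw [hpt a S]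
    rw [key]
    calc (univ.filter fun S : Fin (ℓ + 1) → Fin 3 => gfun a (F1 S) ≠ 0).card
        = ∑ c ∈ univ.filter (fun c : ZMod 3 => gfun a c ≠ 0),
            ((univ.filter fun S : Fin (ℓ + 1) → Fin 3 => gfun a (F1 S) ≠ 0).filter
              fun S => F1 S = c).card := by
          apply Finset.card_eq_sum_card_fiberwise
          intro S hS
          simp only [Finset.mem_coe, mem_filter, mem_univ, true_and] at hS ⊢
          exact hS
      _ = ∑ _c ∈ univ.filter (fun c : ZMod 3 => gfun a c ≠ 0), 3 ^ ℓ := by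
          apply Finset.sum_congr rfl
          intro c hc
          simp only [mem_filter, mem_univ, true_and] at hc
          rw [show ((univ.filter fun S : Fin (ℓ + 1) → Fin 3 => gfun a (F1 S) ≠ 0).filter
              fun S => F1 S = c) = univ.filter fun S : Fin (ℓ + 1) → Fin 3 => F1 S = c from ?_]
          · exact hcount c
          · ext S
            simp only [mem_filter, mem_univ, true_and]
            constructor
            · exact fun h => h.2
            · intro h
              exact ⟨by rw [h]; exact hc, h⟩
      _ = (univ.filter fun c : ZMod 3 => gfun a c ≠ 0).card * 3 ^ ℓ := by
          rw [Finset.sum_const, smul_eq_mul]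
  have hnonzero : ∀ a : Fin 3 → ZMod 3, a ≠ 0 →
      1 ≤ (univ.filter fun c : ZMod 3 => gfun a c ≠ 0).card := by
    intro a ha
    apply Finset.card_pos.mpr
    rw [Finset.filter_nonempty_iff]
    by_contra h
    push_neg at h
    exact ha (gfun_zero a fun c => h c (mem_univ c))
  constructor
  · rw [Fintype.linearIndependent_iff]
    intro a ha
    have hz : ∀ c : ZMod 3, gfun a c = 0 := by
      intro c
      obtain ⟨S, hS⟩ := hex c
      have h2 := congrFun ha S
      simp only [Fin.sum_univ_three, Matrix.cons_val_zero, Matrix.cons_val_one, Matrix.head_cons,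
        Matrix.cons_val_two, Matrix.tail_cons, Pi.add_apply, Pi.smul_apply, smul_eq_mul,
        Pi.zero_apply] at h2
      have h3 : gfun a (F1 S) = 0 := by rw [← hpt a S]; exact h2
      rwa [hS] at h3
    intro i
    rw [gfun_zero a hz]
    rfl
  · constructor
    · refine ⟨![1, 0, 0], by decide, ?_⟩
      rw [hweight ![1, 0, 0]]
      rw [show (univ.filter fun c : ZMod 3 => gfun ![1, 0, 0] c ≠ 0).card = 1 from by decide]
      rw [one_mul]
    · rintro w ⟨a, ha, rfl⟩
      rw [hweight a]
      calc 3 ^ ℓ = 1 * 3 ^ ℓ := (one_mul _).symm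
        _ ≤ _ := Nat.mul_le_mul_right _ (hnonzero a ha)
end
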